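/- arXiv:1011.1521 — 2 statements merged into one kernel-verified Lean document; each statement's English description precedes it below -/
import Mathlib

section
/- The function a ↦ (det(g⁻¹a))^{1/4} on P_n is Lipschitz continuous with respect to the distance d, with Lipschitz constant √n/4: for all a₀, a₁ ∈ P_n, |det(g⁻¹a₁)^{1/4} − det(g⁻¹a₀)^{1/4}| ≤ (√n/4)·d(a₀, a₁). -/
/-!
Along a path `γ` in `P_n`, Jacobi's formula gives
`d/dt det(g⁻¹γ)^{1/4} = ¼ det(g⁻¹γ)^{1/4} tr(γ⁻¹γ')`. The matrix `γ⁻¹γ'` is similar to the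
symmetric matrix `S = γ^{-1/2} γ' γ^{-1/2}`, and `(tr S)² ≤ n Σᵢ Sᵢᵢ² ≤ n tr(S²)` gives
`|tr(γ⁻¹γ')| ≤ √n · tr((γ⁻¹γ')²)^{1/2}`: the derivative is at most `√n/4` times the speed
`‖γ'‖_γ`. Integrating over the `C¹` pieces bounds the change of `det(g⁻¹γ)^{1/4}` by `√n/4`
times the length of `γ`, and taking the infimum over paths (the straight segment is one) gives
the claim.
-/

open Matrix Real MeasureTheory Filter

noncomputable section

/-- The set of real symmetric positive-definite `n × n` matrices. -/
def Pn (n : ℕ) : Set (Matrix (Fin n) (Fin n) ℝ) := {a | a.PosDef}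

/-- `tr_a(b) = tr(a⁻¹ b)`. -/
def trA {n : ℕ} (a b : Matrix (Fin n) (Fin n) ℝ) : ℝ := (a⁻¹ * b).trace

/-- `tr_a(b²) = tr((a⁻¹ b)²)`. -/
def trSq {n : ℕ} (a b : Matrix (Fin n) (Fin n) ℝ) : ℝ := ((a⁻¹ * b) * (a⁻¹ * b)).trace

/-- The `a`-traceless part `b_T = b - (1/n) tr_a(b) a`. -/
def tracelessPart {n : ℕ} (a b : Matrix (Fin n) (Fin n) ℝ) : Matrix (Fin n) (Fin n) ℝ :=
  b - ((trA a b) / (n : ℝ)) • a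

/-- `(det (g⁻¹ a))^{1/4}`. -/
def qdet {n : ℕ} (g a : Matrix (Fin n) (Fin n) ℝ) : ℝ := ((g⁻¹ * a).det) ^ ((1 : ℝ) / 4)

/-- The norm `‖b‖_a = (tr((a⁻¹b)²))^{1/2} (det (g⁻¹ a))^{1/4}`. -/
def fiberNorm {n : ℕ} (g a b : Matrix (Fin n) (Fin n) ℝ) : ℝ :=
  Real.sqrt (trSq a b) * qdet g a

/-- Entrywise derivative of a path of matrices. -/
def pathDeriv {n : ℕ} (γ : ℝ → Matrix (Fin n) (Fin n) ℝ) (t : ℝ) : Matrix (Fin n) (Fin n) ℝ :=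
  Matrix.of fun i j => deriv (fun s => γ s i j) t

/-- A path of matrices is `C¹` on a set if it is entrywise `C¹` there. -/
def C1On {n : ℕ} (γ : ℝ → Matrix (Fin n) (Fin n) ℝ) (s : Set ℝ) : Prop :=
  ∀ i j, ContDiffOn ℝ 1 (fun t => γ t i j) s

/-- `γ` is piecewise `C¹` on `[t₀, t₁]`. -/
def PiecewiseC1On {n : ℕ} (γ : ℝ → Matrix (Fin n) (Fin n) ℝ) (t₀ t₁ : ℝ) : Prop :=
  ContinuousOn γ (Set.Icc t₀ t₁) ∧
  ∃ (k : ℕ) (s : Fin (k + 1) → ℝ), StrictMono s ∧ s 0 = t₀ ∧ s (Fin.last k) = t₁ ∧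
    ∀ i : Fin k, C1On γ (Set.Icc (s i.castSucc) (s i.succ))

/-- Length of a path with respect to the fiber metric determined by `g`. -/
def pathLength {n : ℕ} (g : Matrix (Fin n) (Fin n) ℝ) (γ : ℝ → Matrix (Fin n) (Fin n) ℝ)
    (t₀ t₁ : ℝ) : ℝ :=
  ∫ t in t₀..t₁, fiberNorm g (γ t) (pathDeriv γ t)

/-- The Riemannian distance: the infimum of lengths of piecewise `C¹` paths in `P_n`. -/
def ebinDist {n : ℕ} (g a₀ a₁ : Matrix (Fin n) (Fin n) ℝ) : ℝ :=
  sInf {L : ℝ | ∃ γ : ℝ → Matrix (Fin n) (Fin n) ℝ,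
    PiecewiseC1On γ 0 1 ∧ (∀ t ∈ Set.Icc (0 : ℝ) 1, γ t ∈ Pn n) ∧
    γ 0 = a₀ ∧ γ 1 = a₁ ∧ L = pathLength g γ 0 1}

/-- `a·exp(a⁻¹ b)`, using the matrix exponential. -/
def expAt {n : ℕ} (a b : Matrix (Fin n) (Fin n) ℝ) : Matrix (Fin n) (Fin n) ℝ :=
  a * NormedSpace.exp (a⁻¹ * b)

/-- The explicit geodesic with initial point `a₀` and initial tangent `h`. -/
def geodesicPath {n : ℕ} (a₀ h : Matrix (Fin n) (Fin n) ℝ) (t : ℝ) : Matrix (Fin n) (Fin n) ℝ :=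
  let hT := tracelessPart a₀ h
  let q : ℝ := 1 + t / 4 * trA a₀ h
  let r : ℝ := t / 4 * Real.sqrt ((n : ℝ) * trSq a₀ hT)
  if hT = 0 then (q ^ ((4 : ℝ) / n)) • a₀
  else ((q ^ 2 + r ^ 2) ^ ((2 : ℝ) / n)) •
    (a₀ * NormedSpace.exp
      ((4 * Complex.arg ⟨q, r⟩ / Real.sqrt ((n : ℝ) * trSq a₀ hT)) • (a₀⁻¹ * hT)))

/-- The inverse `ψ` of the Riemannian exponential mapping based at `a₀`. -/
def psiMap {n : ℕ} (a₀ b : Matrix (Fin n) (Fin n) ℝ) : Matrix (Fin n) (Fin n) ℝ :=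
  let bT := tracelessPart a₀ b
  let ω : ℝ := Real.sqrt ((n : ℝ) * trSq a₀ bT) / 4
  if bT = 0 then ((4 / (n : ℝ)) * (Real.exp (trA a₀ b / 4) - 1)) • a₀
  else ((4 / (n : ℝ)) * (Real.exp (trA a₀ b / 4) * Real.cos ω - 1)) • a₀ +
    ((4 / Real.sqrt ((n : ℝ) * trSq a₀ bT)) * Real.exp (trA a₀ b / 4) * Real.sin ω) • bT

open Set Topology

namespace Matrix

variable {ι : Type*}

theorem PosDef.add_smul_sub {a₀ a₁ : Matrix ι ι ℝ} (h₀ : a₀.PosDef) (h₁ : a₁.PosDef) {t : ℝ}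
    (ht : t ∈ Icc (0 : ℝ) 1) : (a₀ + t • (a₁ - a₀)).PosDef := by
  obtain rfl | ht₀ := ht.1.eq_or_lt
  · simpa using h₀
  rw [show a₀ + t • (a₁ - a₀) = (1 - t) • a₀ + t • a₁ by module]
  exact PosDef.posSemidef_add (h₀.posSemidef.smul (sub_nonneg.mpr ht.2)) (h₁.smul ht₀)

variable [Fintype ι]

theorem IsSymm.trace_mul_self {A : Matrix ι ι ℝ} (hA : A.IsSymm) :
    (A * A).trace = ∑ i, ∑ j, A i j ^ 2 := by
  simp only [trace, diag, mul_apply, hA.apply, sq]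

theorem IsSymm.sq_trace_le {A : Matrix ι ι ℝ} (hA : A.IsSymm) :
    A.trace ^ 2 ≤ Fintype.card ι * (A * A).trace := by
  calc A.trace ^ 2 ≤ Fintype.card ι * ∑ i, A i i ^ 2 := by
        simpa [trace] using sq_sum_le_card_mul_sum_sq (s := Finset.univ) (f := fun i => A i i)
    _ ≤ Fintype.card ι * (A * A).trace := by
        rw [hA.trace_mul_self]
        gcongr with i
        exact Finset.single_le_sum (f := fun j => A i j ^ 2) (fun _ _ => sq_nonneg _)
          (Finset.mem_univ i)

variable [DecidableEq ι]

theorem sum_det_updateCol_eq_trace_adjugate_mul {𝕜 : Type*} [CommRing 𝕜] (A B : Matrix ι ι 𝕜) :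
    ∑ i, (A.updateCol i fun k => B k i).det = (A.adjugate * B).trace := by
  simp only [← cramer_apply, cramer_eq_adjugate_mulVec, trace, diag, mul_apply, mulVec,
    dotProduct]

theorem prod_updateCol_perm {𝕜 : Type*} [CommRing 𝕜] (A : Matrix ι ι 𝕜) (v : ι → 𝕜)
    (σ : Equiv.Perm ι) (i : ι) :
    ∏ j, A.updateCol i v (σ j) j = (∏ j ∈ Finset.univ.erase i, A (σ j) j) * v (σ i) := by
  rw [← Finset.mul_prod_erase _ _ (Finset.mem_univ i), mul_comm, updateCol_self]
  congr 1
  refine Finset.prod_congr rfl fun j hj => ?_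
  rw [updateCol_ne (Finset.ne_of_mem_erase hj)]

theorem hasDerivAt_det {𝕜 : Type*} [NontriviallyNormedField 𝕜] {γ : 𝕜 → Matrix ι ι 𝕜}
    {b : Matrix ι ι 𝕜} {t : 𝕜} (hγ : ∀ i j, HasDerivAt (fun s => γ s i j) (b i j) t) :
    HasDerivAt (fun s => (γ s).det) ((γ t).adjugate * b).trace t := by
  have h := HasDerivAt.fun_sum (u := Finset.univ) fun σ _ =>
    (HasDerivAt.fun_finsetProd (u := Finset.univ) fun i _ => hγ (σ i) i).const_mul
      ((Equiv.Perm.sign σ : ℤ) : 𝕜)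
  simp only [det_apply']
  refine h.congr_deriv ?_
  simp only [← sum_det_updateCol_eq_trace_adjugate_mul, det_apply', prod_updateCol_perm,
    Finset.mul_sum, smul_eq_mul]
  exact Finset.sum_comm

end Matrix

theorem ContinuousOn.matrix_inv {X ι K : Type*} [TopologicalSpace X] [Fintype ι] [DecidableEq ι]
    [Field K] [TopologicalSpace K] [IsTopologicalDivisionRing K] {a : X → Matrix ι ι K}
    {s : Set X} (ha : ContinuousOn a s) (hdet : ∀ x ∈ s, (a x).det ≠ 0) :
    ContinuousOn (fun x => (a x)⁻¹) s := fun x hx => by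
  have hinv : ContinuousAt Ring.inverse (a x).det :=
    Ring.inverse_eq_inv' (G₀ := K) ▸ continuousAt_inv₀ (hdet x hx)
  exact (continuousAt_matrix_inv _ hinv).comp_continuousWithinAt (ha x hx)

theorem abs_sub_le_integral_of_partition {F f : ℝ → ℝ} : ∀ {k : ℕ} (s : Fin (k + 1) → ℝ),
    (∀ i : Fin k, IntervalIntegrable f volume (s i.castSucc) (s i.succ) ∧
      |F (s i.succ) - F (s i.castSucc)| ≤ ∫ t in s i.castSucc..s i.succ, f t) →
    IntervalIntegrable f volume (s 0) (s (Fin.last k)) ∧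
      |F (s (Fin.last k)) - F (s 0)| ≤ ∫ t in s 0..s (Fin.last k), f t
  | 0, s, _ => by simp
  | k + 1, s, h => by
    obtain ⟨hint, hle⟩ :=
      abs_sub_le_integral_of_partition (fun i => s i.castSucc) fun i => h i.castSucc
    obtain ⟨hint', hle'⟩ := h (Fin.last k)
    simp only [Fin.castSucc_zero, Fin.succ_last] at hint hle hint' hle'
    refine ⟨hint.trans hint', ?_⟩
    rw [← intervalIntegral.integral_add_adjacent_intervals hint hint']
    calc _ ≤ |F (s (Fin.last (k + 1))) - F (s (Fin.last k).castSucc)|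
          + |F (s (Fin.last k).castSucc) - F (s 0)| := abs_sub_le _ _ _
      _ ≤ _ := by linarith

section FiberGeometry

variable {n : ℕ} {g a b : Matrix (Fin n) (Fin n) ℝ}

open scoped MatrixOrder in
theorem sq_trA_le (ha : a.PosDef) (hb : b.IsSymm) : trA a b ^ 2 ≤ n * trSq a b := by
  set s := CFC.sqrt a⁻¹
  have hss : s * s = a⁻¹ := CFC.sqrt_mul_sqrt_self _ ha.inv.posSemidef.nonneg
  have hs : s.IsSymm := by
    simpa using (CFC.sqrt_nonneg a⁻¹).posSemidef.isHermitian
  have hsbs : (s * b * s).IsSymm := by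
    rw [IsSymm, transpose_mul, transpose_mul, hs.eq, hb.eq, Matrix.mul_assoc]
  have htrA : trA a b = (s * b * s).trace := by
    rw [trA, ← hss, Matrix.mul_assoc, trace_mul_comm s, Matrix.mul_assoc]
  have htrSq : trSq a b = (s * b * s * (s * b * s)).trace := by
    rw [trSq, ← hss, Matrix.mul_assoc s s b, Matrix.mul_assoc s, trace_mul_comm s]
    simp only [Matrix.mul_assoc]
  simpa [htrA, htrSq] using hsbs.sq_trace_le

theorem abs_trA_le (ha : a.PosDef) (hb : b.IsSymm) : |trA a b| ≤ √n * √(trSq a b) := by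
  rw [← Real.sqrt_mul n.cast_nonneg]
  exact Real.abs_le_sqrt (sq_trA_le ha hb)

theorem trace_adjugate_mul_eq_det_mul_trA (ha : a.det ≠ 0) (b : Matrix (Fin n) (Fin n) ℝ) :
    (a.adjugate * b).trace = a.det * trA a b := by
  rw [trA, inv_def, Ring.inverse_eq_inv', smul_mul, trace_smul, smul_eq_mul,
    mul_inv_cancel_left₀ ha]

theorem qdet_eq (g a : Matrix (Fin n) (Fin n) ℝ) :
    qdet g a = (g.det⁻¹ * a.det) ^ (1 / 4 : ℝ) := by
  rw [qdet, det_mul, det_nonsing_inv, Ring.inverse_eq_inv']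

theorem qdet_pos (hg : g.PosDef) (ha : a.PosDef) : 0 < qdet g a := by
  rw [qdet_eq]
  exact Real.rpow_pos_of_pos (mul_pos (inv_pos.mpr hg.det_pos) ha.det_pos) _

theorem hasDerivAt_qdet {γ : ℝ → Matrix (Fin n) (Fin n) ℝ} {t : ℝ} (hg : g.det ≠ 0)
    (hγ : (γ t).det ≠ 0) (hb : ∀ i j, HasDerivAt (fun s => γ s i j) (b i j) t) :
    HasDerivAt (fun s => qdet g (γ s)) (qdet g (γ t) / 4 * trA (γ t) b) t := by
  have hx : g.det⁻¹ * (γ t).det ≠ 0 := mul_ne_zero (inv_ne_zero hg) hγ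
  have h := ((Matrix.hasDerivAt_det hb).const_mul g.det⁻¹).rpow_const (p := 1 / 4) (Or.inl hx)
  simp only [← qdet_eq] at h
  refine h.congr_deriv ?_
  rw [trace_adjugate_mul_eq_det_mul_trA hγ, Real.rpow_sub_one hx, qdet_eq]
  field_simp

theorem abs_qdet_mul_trA_le (hg : g.PosDef) (ha : a.PosDef) (hb : b.IsSymm) :
    |qdet g a / 4 * trA a b| ≤ √n / 4 * fiberNorm g a b := by
  have hq := qdet_pos hg ha
  rw [abs_mul, abs_of_pos (by positivity), fiberNorm]
  calc qdet g a / 4 * |trA a b| ≤ qdet g a / 4 * (√n * √(trSq a b)) := by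
        gcongr; exact abs_trA_le ha hb
    _ = √n / 4 * (√(trSq a b) * qdet g a) := by ring

variable {X : Type*} [TopologicalSpace X] {a b : X → Matrix (Fin n) (Fin n) ℝ} {s : Set X}

theorem ContinuousOn.qdet (ha : ContinuousOn a s) : ContinuousOn (fun x => qdet g (a x)) s :=
  (continuous_id.matrix_det.comp_continuousOn (continuousOn_const.mul ha)).rpow_const
    fun _ _ => Or.inr (by norm_num)

theorem ContinuousOn.fiberNorm (ha : ContinuousOn a s) (hb : ContinuousOn b s)
    (hdet : ∀ x ∈ s, (a x).det ≠ 0) : ContinuousOn (fun x => fiberNorm g (a x) (b x)) s := by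
  have hab := (ha.matrix_inv hdet).mul hb
  exact (continuous_id.matrix_trace.comp_continuousOn (hab.mul hab)).sqrt.mul ha.qdet

end FiberGeometry

section Paths

variable {n : ℕ} {γ : ℝ → Matrix (Fin n) (Fin n) ℝ} {g : Matrix (Fin n) (Fin n) ℝ}
  {s : Set ℝ} {t c d t₀ t₁ : ℝ}

/-- Unlike `pathDeriv`, this is continuous on a closed `C¹` piece, endpoints included. -/
def pathDerivWithin (γ : ℝ → Matrix (Fin n) (Fin n) ℝ) (s : Set ℝ) (t : ℝ) :
    Matrix (Fin n) (Fin n) ℝ :=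
  Matrix.of fun i j => derivWithin (fun u => γ u i j) s t

theorem pathDerivWithin_of_mem_nhds (ht : s ∈ 𝓝 t) : pathDerivWithin γ s t = pathDeriv γ t :=
  Matrix.ext fun _ _ => derivWithin_of_mem_nhds ht

theorem isSymm_pathDerivWithin (hγ : ∀ u ∈ s, (γ u).IsSymm) (ht : t ∈ s) :
    (pathDerivWithin γ s t).IsSymm :=
  IsSymm.ext fun i j => derivWithin_congr (fun u hu => (hγ u hu).apply i j) ((hγ t ht).apply i j)

namespace C1On

theorem continuousOn (h : C1On γ s) : ContinuousOn γ s :=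
  continuousOn_pi.mpr fun i => continuousOn_pi.mpr fun j => (h i j).continuousOn

theorem continuousOn_pathDerivWithin (h : C1On γ s) (hs : UniqueDiffOn ℝ s) :
    ContinuousOn (pathDerivWithin γ s) s :=
  continuousOn_pi.mpr fun i => continuousOn_pi.mpr fun j =>
    (h i j).continuousOn_derivWithin hs le_rfl

theorem hasDerivAt (h : C1On γ s) (ht : s ∈ 𝓝 t) (i j : Fin n) :
    HasDerivAt (fun u => γ u i j) (pathDeriv γ t i j) t :=
  (((h i j).differentiableOn one_ne_zero).differentiableAt ht).hasDerivAt

end C1On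

theorem intervalIntegrable_fiberNorm_pathDeriv (g : Matrix (Fin n) (Fin n) ℝ) (hcd : c < d)
    (hγ : C1On γ (Icc c d)) (hdet : ∀ t ∈ Icc c d, (γ t).det ≠ 0) :
    IntervalIntegrable (fun t => fiberNorm g (γ t) (pathDeriv γ t)) volume c d := by
  have hcont : ContinuousOn (fun t => fiberNorm g (γ t) (pathDerivWithin γ (Icc c d) t))
      (Icc c d) :=
    hγ.continuousOn.fiberNorm (hγ.continuousOn_pathDerivWithin (uniqueDiffOn_Icc hcd)) hdet
  rw [intervalIntegrable_iff_integrableOn_Ioo_of_le hcd.le]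
  refine (hcont.integrableOn_Icc.mono_set Ioo_subset_Icc_self).congr_fun (fun t ht => ?_)
    measurableSet_Ioo
  simp only [pathDerivWithin_of_mem_nhds (Icc_mem_nhds ht.1 ht.2)]

theorem abs_qdet_sub_le_integral (hg : g.PosDef) (hcd : c < d) (hγ : C1On γ (Icc c d))
    (hpos : ∀ t ∈ Icc c d, (γ t).PosDef) :
    |qdet g (γ d) - qdet g (γ c)| ≤ ∫ t in c..d, √n / 4 * fiberNorm g (γ t) (pathDeriv γ t) := by
  have hderiv (t) (ht : t ∈ Ioo c d) : HasDerivAt (fun s => qdet g (γ s))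
      (qdet g (γ t) / 4 * trA (γ t) (pathDeriv γ t)) t :=
    hasDerivAt_qdet hg.det_pos.ne' (hpos t (Ioo_subset_Icc_self ht)).det_pos.ne'
      (hγ.hasDerivAt (Icc_mem_nhds ht.1 ht.2))
  have hsymm (t) (ht : t ∈ Ioo c d) : (pathDeriv γ t).IsSymm := by
    rw [← pathDerivWithin_of_mem_nhds (Icc_mem_nhds ht.1 ht.2)]
    exact isSymm_pathDerivWithin (fun u hu => by simpa using (hpos u hu).isHermitian)
      (Ioo_subset_Icc_self ht)
  refine norm_sub_le_integral_of_norm_deriv_le_of_le hcd.le hγ.continuousOn.qdet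
    (fun t ht => (hderiv t ht).differentiableAt.differentiableWithinAt)
    (ae_of_all _ fun t ht => ?_)
    ((intervalIntegrable_fiberNorm_pathDeriv g hcd hγ fun t ht =>
      (hpos t ht).det_pos.ne').const_mul _)
  rw [(hderiv t ht).deriv, Real.norm_eq_abs]
  exact abs_qdet_mul_trA_le hg (hpos t (Ioo_subset_Icc_self ht)) (hsymm t ht)

theorem abs_qdet_sub_le_pathLength (hg : g.PosDef) (hγ : PiecewiseC1On γ t₀ t₁)
    (hpos : ∀ t ∈ Icc t₀ t₁, γ t ∈ Pn n) :
    |qdet g (γ t₁) - qdet g (γ t₀)| ≤ √n / 4 * pathLength g γ t₀ t₁ := by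
  obtain ⟨-, k, s, hs, rfl, rfl, hC1⟩ := hγ
  rw [pathLength, ← intervalIntegral.integral_const_mul]
  refine (abs_sub_le_integral_of_partition (F := fun t => qdet g (γ t)) s fun i => ?_).2
  have hcd := hs (Fin.castSucc_lt_succ (i := i))
  have hpos' : ∀ t ∈ Icc (s i.castSucc) (s i.succ), (γ t).PosDef := fun t ht =>
    hpos t (Icc_subset_Icc (hs.monotone (Fin.zero_le _)) (hs.monotone (Fin.le_last _)) ht)
  exact ⟨(intervalIntegrable_fiberNorm_pathDeriv g hcd (hC1 i) fun t ht =>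
    (hpos' t ht).det_pos.ne').const_mul _, abs_qdet_sub_le_integral hg hcd (hC1 i) hpos'⟩

theorem piecewiseC1On_segment (a₀ a₁ : Matrix (Fin n) (Fin n) ℝ) :
    PiecewiseC1On (fun t : ℝ => a₀ + t • (a₁ - a₀)) 0 1 := by
  refine ⟨by fun_prop, 1, ![0, 1], Fin.strictMono_iff_lt_succ.mpr (by simp), rfl, rfl,
    fun _ i j => ?_⟩
  simp only [Matrix.add_apply, Matrix.smul_apply, Matrix.sub_apply, smul_eq_mul]
  exact ContDiff.contDiffOn (by fun_prop)

end Paths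

theorem stmt_1_general (n : ℕ) (g : Matrix (Fin n) (Fin n) ℝ) (hg : g ∈ Pn n) :
    ∀ a₀ ∈ Pn n, ∀ a₁ ∈ Pn n,
      |qdet g a₁ - qdet g a₀| ≤ Real.sqrt n / 4 * ebinDist g a₀ a₁ := by
  intro a₀ h₀ a₁ h₁
  rw [ebinDist, ← smul_eq_mul, ← Real.sInf_smul_of_nonneg (by positivity)]
  refine le_csInf (Set.Nonempty.smul_set ⟨_, _, piecewiseC1On_segment a₀ a₁,
    fun t ht => Matrix.PosDef.add_smul_sub h₀ h₁ ht, by simp, by simp, rfl⟩) ?_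
  rintro _ ⟨_, ⟨γ, hγ, hpos, rfl, rfl, rfl⟩, rfl⟩
  exact abs_qdet_sub_le_pathLength hg hγ hpos

/-- `a ↦ (det(g⁻¹a))^{1/4}` is `√n/4`-Lipschitz for the distance `d`. -/
theorem stmt_1 (n : ℕ) (hn : 1 ≤ n) (g : Matrix (Fin n) (Fin n) ℝ) (hg : g ∈ Pn n) :
    ∀ a₀ ∈ Pn n, ∀ a₁ ∈ Pn n,
      |qdet g a₁ - qdet g a₀| ≤ Real.sqrt n / 4 * ebinDist g a₀ a₁ :=
  stmt_1_general n g hg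
end
end

section
/- Let a₀ ∈ P_n and let b be a symmetric n×n matrix, with ω := (n·tr_{a₀}(b_T²))^{1/2}/4. Then tr_{a₀}(ψ(b)²) = (16/n)·( e^{tr_{a₀}(b)/2} − 2·e^{tr_{a₀}(b)/4}·cos(ω) + 1 ). Consequently, with a₁ := a₀·exp(a₀⁻¹b), one has ‖ψ(b)‖²_{a₀} = (16/n)·( (det(g⁻¹a₀))^{1/2} − 2·(det(g⁻¹a₀))^{1/4}·(det(g⁻¹a₁))^{1/4}·cos(ω) + (det(g⁻¹a₁))^{1/2} ). -/
open Matrix Real MeasureTheory Filter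

noncomputable section

/-!
With `t = tr_{a₀}(b)`, the summands `a₀` and `b_T` of `ψ(b)` are orthogonal for `tr_{a₀}`
(as `tr_{a₀}(b_T) = 0`), so `tr_{a₀}(ψ(b)²) = (16/n)((e^{t/4} cos ω - 1)² + e^{t/2} sin² ω)`,
which is the first formula. For the second, `det (g⁻¹a₁) = det (g⁻¹a₀) e^t`: the matrix `a₀⁻¹b`
is similar to the symmetric matrix `a₀^{-1/2} b a₀^{-1/2}`, hence diagonalizable, and
`det (exp A) = exp (tr A)` for diagonalizable `A`.
-/

open scoped MatrixOrder

section DetExp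

variable {ι : Type*} [Fintype ι] [DecidableEq ι]

theorem Matrix.det_exp_conj_diagonal {P : Matrix ι ι ℝ} (hP : IsUnit P) (v : ι → ℝ) :
    (NormedSpace.exp (P * diagonal v * P⁻¹)).det = Real.exp (P * diagonal v * P⁻¹).trace := by
  rw [exp_conj P _ hP, det_conj hP, exp_diagonal, det_diagonal, trace_mul_cycle,
    nonsing_inv_mul P ((isUnit_iff_isUnit_det P).mp hP), Matrix.one_mul, trace_diagonal,
    Real.exp_sum]
  exact Finset.prod_congr rfl fun i _ => by rw [Pi.coe_exp, ← Real.exp_eq_exp_ℝ]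

theorem Matrix.IsHermitian.exists_eq_conj_diagonal {S : Matrix ι ι ℝ} (hS : S.IsHermitian) :
    ∃ P : Matrix ι ι ℝ, IsUnit P ∧ ∃ v, S = P * diagonal v * P⁻¹ := by
  set U : Matrix ι ι ℝ := (hS.eigenvectorUnitary : Matrix ι ι ℝ)
  have hUU : U * star U = 1 := Unitary.mul_star_self_of_mem hS.eigenvectorUnitary.2
  refine ⟨U, Unitary.isUnit_coe, hS.eigenvalues, ?_⟩
  rw [inv_eq_right_inv hUU]
  simpa [RCLike.ofReal_real_eq_id] using hS.spectral_theorem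

theorem Matrix.PosDef.exists_inv_mul_eq_conj_diagonal {a b : Matrix ι ι ℝ} (ha : a.PosDef)
    (hb : b.IsSymm) :
    ∃ P : Matrix ι ι ℝ, IsUnit P ∧ ∃ v, a⁻¹ * b = P * diagonal v * P⁻¹ := by
  set M := CFC.sqrt a⁻¹
  have hMM : M * M = a⁻¹ := CFC.sqrt_mul_sqrt_self _ ha.inv.posSemidef.nonneg
  have hM : IsUnit M := (CFC.isUnit_sqrt_iff _ ha.inv.posSemidef.nonneg).mpr ha.inv.isUnit
  have hMH : M.IsHermitian := (CFC.sqrt_nonneg a⁻¹).posSemidef.isHermitian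
  have hS : (M * b * M).IsHermitian := by
    rw [IsHermitian, conjTranspose_mul, conjTranspose_mul, hMH.eq, mul_assoc,
      conjTranspose_eq_transpose_of_trivial, hb.eq]
  obtain ⟨U, hU, v, hUv⟩ := hS.exists_eq_conj_diagonal
  refine ⟨M * U, hM.mul hU, v, ?_⟩
  calc a⁻¹ * b = M * (M * b * M) * M⁻¹ := by
        rw [← mul_assoc, mul_nonsing_inv_cancel_right _ _ ((isUnit_iff_isUnit_det M).mp hM),
          ← mul_assoc, hMM]
    _ = M * U * diagonal v * (M * U)⁻¹ := by
        rw [hUv, mul_inv_rev]; simp only [mul_assoc]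

theorem Matrix.PosDef.det_exp_inv_mul {a b : Matrix ι ι ℝ} (ha : a.PosDef) (hb : b.IsSymm) :
    (NormedSpace.exp (a⁻¹ * b)).det = Real.exp (a⁻¹ * b).trace := by
  obtain ⟨P, hP, v, h⟩ := ha.exists_inv_mul_eq_conj_diagonal hb
  rw [h, det_exp_conj_diagonal hP]

end DetExp

theorem Real.exp_div_two_eq_exp_div_four_sq (t : ℝ) :
    Real.exp (t / 2) = Real.exp (t / 4) ^ 2 := by
  rw [← Real.exp_nat_mul]
  ring_nf

section PsiMap

variable {n : ℕ} {a : Matrix (Fin n) (Fin n) ℝ}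

theorem trA_tracelessPart (ha : IsUnit a.det) (hn : n ≠ 0) (b : Matrix (Fin n) (Fin n) ℝ) :
    trA a (tracelessPart a b) = 0 := by
  have hn' : (n : ℝ) ≠ 0 := Nat.cast_ne_zero.mpr hn
  simp only [trA, tracelessPart, Matrix.mul_sub, Matrix.mul_smul, nonsing_inv_mul a ha,
    trace_sub, trace_smul, trace_one, Fintype.card_fin, smul_eq_mul]
  field_simp
  ring

theorem trSq_smul_add_smul (ha : IsUnit a.det) {c : Matrix (Fin n) (Fin n) ℝ} (hc : trA a c = 0)
    (α β : ℝ) : trSq a (α • a + β • c) = α ^ 2 * n + β ^ 2 * trSq a c := by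
  simp only [trSq, trA] at hc ⊢
  simp only [Matrix.mul_add, Matrix.mul_smul, nonsing_inv_mul a ha, Matrix.add_mul,
    Matrix.smul_mul, Matrix.one_mul, Matrix.mul_one, trace_add, trace_smul, trace_one,
    Fintype.card_fin, hc, smul_eq_mul]
  ring

theorem psiMap_eq (a b : Matrix (Fin n) (Fin n) ℝ) :
    psiMap a b =
      ((4 / n) * (Real.exp (trA a b / 4) *
        Real.cos (Real.sqrt (n * trSq a (tracelessPart a b)) / 4) - 1)) • a +
      ((4 / Real.sqrt (n * trSq a (tracelessPart a b))) * Real.exp (trA a b / 4) *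
        Real.sin (Real.sqrt (n * trSq a (tracelessPart a b)) / 4)) • tracelessPart a b := by
  dsimp only [psiMap]
  split_ifs with h
  · simp [h, trSq]
  · rfl

theorem trSq_psiMap (ha : IsUnit a.det) (hn : n ≠ 0) (b : Matrix (Fin n) (Fin n) ℝ) :
    trSq a (psiMap a b) =
      16 / n * (Real.exp (trA a b / 2) -
        2 * Real.exp (trA a b / 4) *
          Real.cos (Real.sqrt (n * trSq a (tracelessPart a b)) / 4) + 1) := by
  have hn' : (n : ℝ) ≠ 0 := Nat.cast_ne_zero.mpr hn
  set s := trSq a (tracelessPart a b)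
  set r := Real.sqrt (n * s)
  set x := Real.exp (trA a b / 4)
  -- when `r = 0` the junk value `4 / 0 = 0` is harmless, since `sin (r / 4) = 0` as well
  have hsin : (4 / r) ^ 2 * s * Real.sin (r / 4) ^ 2 = 16 / n * Real.sin (r / 4) ^ 2 := by
    rcases eq_or_ne r 0 with hr | hr
    · simp [hr]
    · have hr2 : r ^ 2 = n * s := Real.sq_sqrt (Real.sqrt_ne_zero'.mp hr).le
      field_simp
      rw [hr2]
      ring
  have hn_inv : (n : ℝ) * (n : ℝ)⁻¹ ^ 2 = (n : ℝ)⁻¹ := by field_simp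
  rw [psiMap_eq, trSq_smul_add_smul ha (trA_tracelessPart ha hn b),
    Real.exp_div_two_eq_exp_div_four_sq]
  linear_combination (16 / n * x ^ 2) * Real.sin_sq_add_cos_sq (r / 4) + x ^ 2 * hsin +
    16 * (x * Real.cos (r / 4) - 1) ^ 2 * hn_inv

theorem trSq_psiMap_nonneg (ha : IsUnit a.det) (hn : n ≠ 0) (b : Matrix (Fin n) (Fin n) ℝ) :
    0 ≤ trSq a (psiMap a b) := by
  rw [trSq_psiMap ha hn, Real.exp_div_two_eq_exp_div_four_sq]
  set ω := Real.sqrt (n * trSq a (tracelessPart a b)) / 4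
  have hsq : Real.exp (trA a b / 4) ^ 2 - 2 * Real.exp (trA a b / 4) * Real.cos ω + 1 =
      (Real.exp (trA a b / 4) - Real.cos ω) ^ 2 + Real.sin ω ^ 2 := by
    linear_combination -Real.sin_sq_add_cos_sq ω
  rw [hsq]
  positivity

variable {g : Matrix (Fin n) (Fin n) ℝ}

theorem det_inv_mul_pos (hg : g.PosDef) (ha : a.PosDef) : 0 < (g⁻¹ * a).det := by
  rw [det_mul]
  exact mul_pos hg.inv.det_pos ha.det_pos

theorem det_inv_mul_expAt (ha : a.PosDef) {b : Matrix (Fin n) (Fin n) ℝ} (hb : b.IsSymm) :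
    (g⁻¹ * expAt a b).det = (g⁻¹ * a).det * Real.exp (trA a b) := by
  rw [expAt, ← Matrix.mul_assoc, det_mul, ha.det_exp_inv_mul hb, trA]

theorem qdet_sq (h : 0 ≤ (g⁻¹ * a).det) : qdet g a ^ 2 = (g⁻¹ * a).det ^ (1 / 2 : ℝ) := by
  rw [qdet, ← Real.rpow_natCast, ← Real.rpow_mul h]
  norm_num

theorem qdet_expAt (hg : g.PosDef) (ha : a.PosDef) {b : Matrix (Fin n) (Fin n) ℝ}
    (hb : b.IsSymm) : qdet g (expAt a b) = qdet g a * Real.exp (trA a b / 4) := by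
  rw [qdet, det_inv_mul_expAt ha hb,
    Real.mul_rpow (det_inv_mul_pos hg ha).le (Real.exp_pos _).le, ← Real.exp_mul, qdet]
  ring_nf

end PsiMap

/-- the norm of `ψ(b)`. -/
theorem stmt_9 (n : ℕ) (hn : 1 ≤ n) (g : Matrix (Fin n) (Fin n) ℝ) (hg : g ∈ Pn n)
    (a₀ : Matrix (Fin n) (Fin n) ℝ) (ha₀ : a₀ ∈ Pn n)
    (b : Matrix (Fin n) (Fin n) ℝ) (hb : b.IsSymm) :
    trSq a₀ (psiMap a₀ b) =
      16 / n * (Real.exp (trA a₀ b / 2) -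
        2 * Real.exp (trA a₀ b / 4) *
          Real.cos (Real.sqrt ((n : ℝ) * trSq a₀ (tracelessPart a₀ b)) / 4) + 1) ∧
    fiberNorm g a₀ (psiMap a₀ b) ^ 2 =
      16 / n * (((g⁻¹ * a₀).det) ^ ((1 : ℝ) / 2) -
        2 * qdet g a₀ * qdet g (expAt a₀ b) *
          Real.cos (Real.sqrt ((n : ℝ) * trSq a₀ (tracelessPart a₀ b)) / 4) +
        ((g⁻¹ * expAt a₀ b).det) ^ ((1 : ℝ) / 2)) := by
  have ha : IsUnit a₀.det := (PosDef.det_pos ha₀).ne'.isUnit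
  have hn₀ : n ≠ 0 := Nat.one_le_iff_ne_zero.mp hn
  have hd : 0 < (g⁻¹ * a₀).det := det_inv_mul_pos hg ha₀
  have hd₁ : 0 ≤ (g⁻¹ * expAt a₀ b).det := by
    rw [det_inv_mul_expAt ha₀ hb]
    positivity
  refine ⟨trSq_psiMap ha hn₀ b, ?_⟩
  rw [fiberNorm, mul_pow, Real.sq_sqrt (trSq_psiMap_nonneg ha hn₀ b), ← qdet_sq hd.le,
    ← qdet_sq hd₁, qdet_expAt hg ha₀ hb, trSq_psiMap ha hn₀ b,
    Real.exp_div_two_eq_exp_div_four_sq]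
  ring
end
end
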